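/- Let A be an m×n real matrix whose rows a₁ᵀ,…,aₘᵀ are linearly independent, let G be a connected undirected simple graph on m vertices with Laplacian L, let Pᵢ = I − aᵢaᵢᵀ/(aᵢᵀaᵢ), P = diag(P₁,…,Pₘ), and L̄ = L ⊗ Iₙ. Then the kernel of P L̄ is exactly the consensus subspace: P L̄ 𝒳 = 0 for 𝒳 = (x₁,…,xₘ) ∈ (ℝⁿ)ᵐ if and only if there exists q ∈ ℝⁿ with xᵢ = q for all i. Equivalently, if Pᵢ X L eᵢ = 0 for all i for a matrix X = [x₁ … xₘ], then all columns of X are identical. -/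

import Mathlib

open Matrix
open scoped Kronecker

/-!
Write `𝒳 = vec X` and `Y = X L`, so that `P L̄ 𝒳 = 0` says `Pᵢ yᵢ = 0`, i.e. `yᵢ = cᵢ aᵢ`, for every
column `yᵢ` of `Y`. Since `L 𝟙 = 0`, the columns of `Y` sum to `X L 𝟙 = 0`, so `∑ cᵢ aᵢ = 0` and
linear independence forces `Y = 0`. Each row of `X` then lies in the kernel of `L`, which for a
connected graph consists of the constant vectors.
-/

/-- The orthogonal projection `Pᵢ = I - aᵢaᵢᵀ/(aᵢᵀaᵢ)` onto the hyperplane `{z : aᵢᵀz = 0}`. -/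
noncomputable def projMat {n : ℕ} (a : Fin n → ℝ) : Matrix (Fin n) (Fin n) ℝ :=
  1 - (a ⬝ᵥ a)⁻¹ • vecMulVec a a

/-- The block-diagonal matrix `P = diag(P₁,…,Pₘ)`, acting on `(ℝⁿ)ᵐ ≅ ℝ^{mn}`
(indexed by pairs `(block, coordinate)`). -/
noncomputable def blockP {m n : ℕ} (a : Fin m → Fin n → ℝ) :
    Matrix (Fin m × Fin n) (Fin m × Fin n) ℝ :=
  Matrix.of fun p q => if p.1 = q.1 then projMat (a p.1) p.2 q.2 else 0

section Projection

variable {n : ℕ}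

theorem projMat_mulVec (a y : Fin n → ℝ) :
    projMat a *ᵥ y = y - ((a ⬝ᵥ a)⁻¹ * (a ⬝ᵥ y)) • a := by
  rw [projMat, sub_mulVec, one_mulVec, smul_mulVec, vecMulVec_mulVec, op_smul_eq_smul, smul_smul]

theorem eq_smul_of_projMat_mulVec_eq_zero {a y : Fin n → ℝ} (h : projMat a *ᵥ y = 0) :
    y = ((a ⬝ᵥ a)⁻¹ * (a ⬝ᵥ y)) • a := by
  rwa [projMat_mulVec, sub_eq_zero] at h

theorem eq_zero_of_projMat_mulVec_eq_zero_of_sum_eq_zero {ι : Type*} [Fintype ι]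
    {a : ι → Fin n → ℝ} (ha : LinearIndependent ℝ a) {y : ι → Fin n → ℝ}
    (hy : ∀ i, projMat (a i) *ᵥ y i = 0) (hsum : ∑ i, y i = 0) : y = 0 := by
  set c : ι → ℝ := fun i => (a i ⬝ᵥ a i)⁻¹ * (a i ⬝ᵥ y i)
  have hyc : ∀ i, y i = c i • a i := fun i => eq_smul_of_projMat_mulVec_eq_zero (hy i)
  have hc : c = 0 := funext <| Fintype.linearIndependent_iff.mp ha c <| by
    simpa only [hyc] using hsum
  funext i
  rw [hyc i, hc, Pi.zero_apply, zero_smul, Pi.zero_apply]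

end Projection

theorem blockP_mulVec_vec_apply {m n : ℕ} (a : Fin m → Fin n → ℝ) (Y : Matrix (Fin n) (Fin m) ℝ)
    (i : Fin m) (k : Fin n) : (blockP a *ᵥ vec Y) (i, k) = (projMat (a i) *ᵥ Yᵀ i) k := by
  simp [mulVec, dotProduct, Fintype.sum_prod_type, blockP]

theorem blockP_mulVec_vec_eq_zero_iff {m n : ℕ} (a : Fin m → Fin n → ℝ)
    (Y : Matrix (Fin n) (Fin m) ℝ) : blockP a *ᵥ vec Y = 0 ↔ ∀ i, projMat (a i) *ᵥ Yᵀ i = 0 := by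
  simp only [funext_iff, Prod.forall, blockP_mulVec_vec_apply, Pi.zero_apply]

section Laplacian

variable {V : Type*} [Fintype V] [DecidableEq V] {G : SimpleGraph V} [DecidableRel G.Adj]

theorem mul_lapMatrix_eq_zero_iff (hG : G.Connected) {κ : Type*} (X : Matrix κ V ℝ) :
    X * G.lapMatrix ℝ = 0 ↔ ∀ k i j, X k i = X k j := by
  have hrow : ∀ k, (X * G.lapMatrix ℝ) k = G.lapMatrix ℝ *ᵥ X k := fun k => by
    rw [← vecMul_transpose, (G.isSymm_lapMatrix ℝ).eq]; rfl
  calc X * G.lapMatrix ℝ = 0 ↔ ∀ k, G.lapMatrix ℝ *ᵥ X k = 0 := by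
        simp only [← hrow, funext_iff, Matrix.ext_iff.symm, Matrix.zero_apply, Pi.zero_apply]
    _ ↔ ∀ k i j, X k i = X k j := by
        simp only [SimpleGraph.lapMatrix_mulVec_eq_zero_iff_forall_reachable, hG.preconnected _ _,
          true_imp_iff]

theorem forall_projMat_mulVec_mul_lapMatrix_eq_zero_iff {n : ℕ} (hG : G.Connected)
    {a : V → Fin n → ℝ} (ha : LinearIndependent ℝ a) (X : Matrix (Fin n) V ℝ) :
    (∀ i, projMat (a i) *ᵥ (X * G.lapMatrix ℝ)ᵀ i = 0) ↔ ∀ k i j, X k i = X k j := by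
  rw [← mul_lapMatrix_eq_zero_iff hG]
  refine ⟨fun h => ?_, fun h i => by rw [h, transpose_zero]; exact mulVec_zero _⟩
  have hL : G.lapMatrix ℝ *ᵥ 1 = 0 := G.lapMatrix_mulVec_const_eq_zero
  have hsum : ∑ i, (X * G.lapMatrix ℝ)ᵀ i = 0 := by
    rw [← mulVec_one, ← mulVec_mulVec, hL, mulVec_zero]
  exact transpose_eq_zero.mp (eq_zero_of_projMat_mulVec_eq_zero_of_sum_eq_zero ha h hsum)

end Laplacian

/-- If the rows of `A` are linearly independent and `G` is connected, then
the kernel of `P L̄` is exactly the consensus subspace: `P L̄ 𝒳 = 0` iff all blocks of `𝒳` are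
equal. Equivalently, if `Pᵢ X L eᵢ = 0` for all `i` then all columns of `X` are identical. -/
theorem ker_PL_eq_consensus
    {m n : ℕ} (A : Matrix (Fin m) (Fin n) ℝ)
    (hA : LinearIndependent ℝ (fun i => A i))
    (G : SimpleGraph (Fin m)) [DecidableRel G.Adj] (hG : G.Connected) :
    (∀ X : Fin m × Fin n → ℝ,
      (blockP (fun i => A i) * (G.lapMatrix ℝ ⊗ₖ (1 : Matrix (Fin n) (Fin n) ℝ))) *ᵥ X = 0 ↔
        ∃ q : Fin n → ℝ, ∀ i k, X (i, k) = q k) ∧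
    (∀ X : Matrix (Fin n) (Fin m) ℝ,
      (∀ i, projMat (A i) *ᵥ (fun k => (X * G.lapMatrix ℝ) k i) = 0) →
        ∀ i j k, X k i = X k j) := by
  have hconsensus := forall_projMat_mulVec_mul_lapMatrix_eq_zero_iff hG hA
  refine ⟨fun X => ?_, fun X hX i j k => (hconsensus X).mp hX k i j⟩
  set Xmat : Matrix (Fin n) (Fin m) ℝ := of fun k i => X (i, k)
  have hPL : (blockP (fun i => A i) * (G.lapMatrix ℝ ⊗ₖ 1)) *ᵥ vec Xmat =
      blockP (fun i => A i) *ᵥ vec (Xmat * G.lapMatrix ℝ) := by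
    rw [← mulVec_mulVec, kronecker_mulVec_vec, Matrix.one_mul, (G.isSymm_lapMatrix ℝ).eq]
  have : Nonempty (Fin m) := hG.nonempty
  change _ *ᵥ vec Xmat = 0 ↔ _
  rw [hPL, blockP_mulVec_vec_eq_zero_iff, hconsensus]
  exact ⟨fun h => ⟨fun k => Xmat k (Classical.arbitrary _), fun i k => h k i _⟩,
    fun ⟨q, hq⟩ k i j => (hq i k).trans (hq j k).symm⟩
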